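/- arXiv:1104.3774 — 3 statements merged into one kernel-verified Lean document; each statement's English description precedes it below -/
import Mathlib

section
/- Let L be a solvable Lie algebra, A a minimal ideal of L, and U a subalgebra of L. The following are equivalent: (i) A ⊄ S for some S ∈ Ω(U,L)_min; (ii) A ⊄ M for some maximal subalgebra M of L containing U; (iii) for every S ∈ Ω(U,L)_min there exists a complement of A in L containing S. -/
open LieAlgebra

namespace Paper

variable {F : Type*} [Field F] {L : Type*} [LieRing L] [LieAlgebra F L]

/-- The interval `[U:L]` is complemented: every subalgebra containing `U`
has a complement over `U`. -/
def IsComplementedInterval (U : LieSubalgebra F L) : Prop :=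
  ∀ S : LieSubalgebra F L, U ≤ S →
    ∃ T : LieSubalgebra F L, U ≤ T ∧ S ⊓ T = U ∧ S ⊔ T = ⊤

/-- `Ω(U,L)`. -/
def Omega (U : LieSubalgebra F L) : Set (LieSubalgebra F L) :=
  {S | U ≤ S ∧ IsComplementedInterval S}

/-- `Ω(U,L)_min`, the inclusion-minimal elements. -/
def OmegaMin (U : LieSubalgebra F L) : Set (LieSubalgebra F L) :=
  {S | S ∈ Omega U ∧ ∀ T ∈ Omega U, T ≤ S → T = S}

/-- `φ(U,L)`, the intersection of all maximal subalgebras containing `U`. -/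
def phi (U : LieSubalgebra F L) : LieSubalgebra F L :=
  sInf {M : LieSubalgebra F L | IsCoatom M ∧ U ≤ M}

/-- A subalgebra which is an ideal of `L`. -/
def IsIdealSubalg (A : LieSubalgebra F L) : Prop :=
  ∀ x : L, ∀ a ∈ A, ⁅x, a⁆ ∈ A

/-- A minimal ideal of `L`. -/
def IsMinimalIdeal (A : LieSubalgebra F L) : Prop :=
  A ≠ ⊥ ∧ IsIdealSubalg A ∧
    ∀ B : LieSubalgebra F L, IsIdealSubalg B → B ≤ A → B = ⊥ ∨ B = A

/-- A chief series `0 = A 0 < A 1 < … < A n = L`. -/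
def IsChiefSeries (A : ℕ → LieSubalgebra F L) (n : ℕ) : Prop :=
  A 0 = ⊥ ∧ A n = ⊤ ∧ (∀ i, IsIdealSubalg (A i)) ∧
    ∀ i < n, A i < A (i + 1) ∧
      ∀ B : LieSubalgebra F L, IsIdealSubalg B → A i ≤ B → B ≤ A (i + 1) →
        B = A i ∨ B = A (i + 1)

/-- The chief factor `A/B` is `U`-Frattini. -/
def IsUFrattiniFactor (U B A : LieSubalgebra F L) : Prop :=
  A ≤ phi (U ⊔ B) ∨ U ⊔ B = ⊤

/-- `B` is a `U`-prefrattini subalgebra with respect to the series `A`. -/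
def IsPrefrattiniWrt (U : LieSubalgebra F L) (A : ℕ → LieSubalgebra F L) (n : ℕ)
    (B : LieSubalgebra F L) : Prop :=
  ∃ M : ℕ → LieSubalgebra F L,
    (∀ i < n, ¬ IsUFrattiniFactor U (A i) (A (i + 1)) →
      IsCoatom (M i) ∧ U ⊔ A i ≤ M i ∧ ¬ A (i + 1) ≤ M i) ∧
    B = ⨅ i ∈ {i | i < n ∧ ¬ IsUFrattiniFactor U (A i) (A (i + 1))}, M i

/-- `B` is a `U`-prefrattini subalgebra of `L` (with respect to some chief series). -/
def IsPrefrattini (U B : LieSubalgebra F L) : Prop :=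
  ∃ (n : ℕ) (A : ℕ → LieSubalgebra F L), IsChiefSeries A n ∧ IsPrefrattiniWrt U A n B

/-- The lower central series of an ideal `I` of `L` (computed inside `L`):
`idealLCS I k = I^{k+1}`. -/
def idealLCS (I : LieIdeal F L) : ℕ → LieIdeal F L
  | 0 => I
  | k + 1 => ⁅I, idealLCS I k⁆

/-- The nilpotent residual `L^∞`. -/
def nilpotentResidual (F : Type*) (L : Type*) [Field F] [LieRing L] [LieAlgebra F L] :
    LieIdeal F L :=
  ⨅ k, LieModule.lowerCentralSeries F L L k

/-- The exponential `exp (ad x)` truncated below `p` (all higher terms vanish when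
`ad x` has nilpotency index at most `p`). -/
noncomputable def expAd (F : Type*) {L : Type*} [Field F] [LieRing L] [LieAlgebra F L]
    (p : ℕ) (x : L) : L →ₗ[F] L :=
  ∑ r ∈ Finset.range p, (r.factorial : F)⁻¹ • ((LieAlgebra.ad F L x : Module.End F L) ^ r : Module.End F L)

/-- The quotient map `L → L ⧸ I` as a morphism of Lie algebras. -/
def quotLieHom (I : LieIdeal F L) : L →ₗ⁅F⁆ L ⧸ I :=
  { I.toSubmodule.mkQ with map_lie' := rfl }

end Paper

/-!
A minimal ideal `A` of a solvable Lie algebra is abelian. Hence, whenever `A ⊔ X = L`, the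
intersection `A ⊓ X` is an ideal of `L`, so it is `0` or `A`; in particular every complement of
`A` is a maximal subalgebra. Moreover `A ⊔ X = A + X`, so the modular law is available for joins
with `A`.

If `A ⊄ S` for some `S` with `[S:L]` complemented, a complement of `A ⊔ S` in `[S:L]` is a
complement of `A` containing `S`. Conversely, if `S ∈ Ω(U,L)_min` contained `A` while a maximal
subalgebra `M ⊇ U` did not, the modular law shows that `[S ∩ M : L]` is still complemented,
so `S ∩ M ∈ Ω(U,L)` and minimality gives `S ≤ M`, a contradiction.
-/

namespace Paper

variable {F : Type*} [Field F] {L : Type*} [LieRing L] [LieAlgebra F L]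
  {A B C D M S U X Y Z : LieSubalgebra F L}

open LieSubalgebra in
theorem IsIdealSubalg.toSubmodule_sup (hA : IsIdealSubalg A) (X : LieSubalgebra F L) :
    ((A ⊔ X : LieSubalgebra F L) : Submodule F L) = (A : Submodule F L) ⊔ X := by
  obtain ⟨P, hP⟩ := ((A : Submodule F L) ⊔ X).exists_lieSubalgebra_coe_eq_iff.mpr <| by
    intro x y hx hy
    obtain ⟨a, ha, m, hm, rfl⟩ := Submodule.mem_sup.mp hx
    obtain ⟨b, hb, n, hn, rfl⟩ := Submodule.mem_sup.mp hy
    have hsplit : ⁅a + m, b + n⁆ = (⁅a + m, b⁆ - ⁅n, a⁆) + ⁅m, n⁆ := by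
      rw [lie_add, add_lie, add_lie, ← lie_skew n a]; abel
    rw [hsplit]
    exact Submodule.add_mem_sup (sub_mem (hA _ b hb) (hA n a ha)) (X.lie_mem hm hn)
  have hle : A ⊔ X ≤ P := sup_le
    ((toSubmodule_le_toSubmodule _ _).mp (hP ▸ le_sup_left))
    ((toSubmodule_le_toSubmodule _ _).mp (hP ▸ le_sup_right))
  exact le_antisymm (((toSubmodule_le_toSubmodule _ _).mpr hle).trans hP.le)
    (sup_le ((toSubmodule_le_toSubmodule _ _).mpr le_sup_left)
      ((toSubmodule_le_toSubmodule _ _).mpr le_sup_right))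

open LieSubalgebra in
theorem sup_inf_assoc_of_le_of_toSubmodule_sup
    (hXY : ((X ⊔ Y : LieSubalgebra F L) : Submodule F L) = (X : Submodule F L) ⊔ Y) (h : X ≤ Z) :
    (X ⊔ Y) ⊓ Z = X ⊔ Y ⊓ Z := by
  refine le_antisymm ?_ (le_inf (sup_le_sup_left inf_le_left X) (sup_le h inf_le_right))
  rw [← toSubmodule_le_toSubmodule, inf_toSubmodule, hXY,
    sup_inf_assoc_of_le _ ((toSubmodule_le_toSubmodule _ _).mpr h)]
  exact sup_le ((toSubmodule_le_toSubmodule _ _).mpr le_sup_left)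
    ((inf_toSubmodule Y Z).symm.le.trans ((toSubmodule_le_toSubmodule _ _).mpr le_sup_right))

theorem IsIdealSubalg.sup_inf_assoc_of_le (hA : IsIdealSubalg A) (Y : LieSubalgebra F L)
    (h : A ≤ Z) : (A ⊔ Y) ⊓ Z = A ⊔ Y ⊓ Z :=
  sup_inf_assoc_of_le_of_toSubmodule_sup (hA.toSubmodule_sup Y) h

theorem IsIdealSubalg.sup_inf_assoc_of_le' (hA : IsIdealSubalg A) (h : X ≤ Z) :
    (X ⊔ A) ⊓ Z = X ⊔ A ⊓ Z :=
  sup_inf_assoc_of_le_of_toSubmodule_sup (by rw [sup_comm, hA.toSubmodule_sup, sup_comm]) h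

/-- If `⁅A, A⁆ = A` then `A` lies in every term of the derived series, so solvability forces
`⁅A, A⁆ = 0`. -/
theorem IsMinimalIdeal.lie_eq_zero [LieAlgebra.IsSolvable L] (hA : IsMinimalIdeal A)
    {a b : L} (ha : a ∈ A) (hb : b ∈ A) : ⁅a, b⁆ = 0 := by
  obtain ⟨hA_ne, hA_ideal, hA_min⟩ := hA
  obtain ⟨I, rfl⟩ := A.exists_lieIdeal_coe_eq_iff.mpr hA_ideal
  have hII : (⁅I, I⁆ : LieIdeal F L) ≤ I := LieSubmodule.lie_le_right I I
  rcases hA_min (⁅I, I⁆ : LieIdeal F L) (fun x y hy => (⁅I, I⁆ : LieIdeal F L).lie_mem hy)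
    (fun x hx => hII hx) with h | h
  · have hab : ⁅a, b⁆ ∈ ((⁅I, I⁆ : LieIdeal F L) : LieSubalgebra F L) :=
      LieSubmodule.lie_mem_lie ha hb
    rwa [h, LieSubalgebra.mem_bot] at hab
  · have hperfect : ⁅I, I⁆ = I := le_antisymm hII fun x hx => by
      rw [← LieIdeal.mem_toLieSubalgebra, h]; exact hx
    have hD : ∀ k, LieAlgebra.derivedSeriesOfIdeal F L k I = I := by
      intro k
      induction k with
      | zero => rfl
      | succ k ih => rw [LieAlgebra.derivedSeriesOfIdeal_succ, ih, hperfect]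
    obtain ⟨k, hk⟩ := LieAlgebra.IsSolvable.solvable (R := F) (L := L)
    have hI : I = ⊥ := by
      rw [← le_bot_iff, ← hk, ← hD k, LieAlgebra.derivedSeries_def]
      exact LieAlgebra.derivedSeriesOfIdeal_mono le_top k
    exact absurd (by rw [hI]; rfl) hA_ne

theorem IsMinimalIdeal.inf_eq_bot_or_le_of_sup_eq_top [LieAlgebra.IsSolvable L]
    (hA : IsMinimalIdeal A) (hX : A ⊔ X = ⊤) : A ⊓ X = ⊥ ∨ A ≤ X := by
  have hideal : IsIdealSubalg (A ⊓ X) := by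
    rintro y z ⟨hzA, hzX⟩
    have hy : y ∈ ((A ⊔ X : LieSubalgebra F L) : Submodule F L) := by rw [hX]; trivial
    rw [hA.2.1.toSubmodule_sup, Submodule.mem_sup] at hy
    obtain ⟨a, ha, m, hm, rfl⟩ := hy
    rw [add_lie, hA.lie_eq_zero ha hzA, zero_add]
    exact ⟨hA.2.1 m z hzA, X.lie_mem hm hzX⟩
  exact (hA.2.2 _ hideal inf_le_left).imp id fun h => inf_eq_left.mp h

theorem IsMinimalIdeal.isCoatom_of_sup_eq_top_of_inf_eq_bot [LieAlgebra.IsSolvable L]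
    (hA : IsMinimalIdeal A) (hsup : A ⊔ M = ⊤) (hinf : A ⊓ M = ⊥) : IsCoatom M := by
  refine ⟨fun hM => hA.1 (by rwa [hM, inf_top_eq] at hinf), fun K hMK => ?_⟩
  have hAK : A ⊔ K = ⊤ := top_unique (hsup ▸ sup_le_sup_left hMK.le A)
  rcases hA.inf_eq_bot_or_le_of_sup_eq_top hAK with h | h
  · refine absurd ?_ hMK.ne'
    calc K = (M ⊔ A) ⊓ K := by rw [sup_comm, hsup, top_inf_eq]
      _ = M ⊔ A ⊓ K := hA.2.1.sup_inf_assoc_of_le' hMK.le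
      _ = M := by rw [h, sup_bot_eq]
  · exact top_unique (hsup ▸ sup_le h hMK.le)

theorem IsMinimalIdeal.exists_complement_of_not_le [LieAlgebra.IsSolvable L]
    (hA : IsMinimalIdeal A) (hS : IsComplementedInterval S) (hAS : ¬ A ≤ S) :
    ∃ T, A ⊔ T = ⊤ ∧ A ⊓ T = ⊥ ∧ S ≤ T := by
  obtain ⟨T, hST, hinf, hsup⟩ := hS (A ⊔ S) le_sup_right
  have hAT : A ⊔ T = ⊤ :=
    top_unique (hsup ▸ sup_le (sup_le le_sup_left (hST.trans le_sup_right)) le_sup_right)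
  refine ⟨T, hAT, (hA.inf_eq_bot_or_le_of_sup_eq_top hAT).resolve_right fun hAT' => ?_, hST⟩
  exact hAS (hinf ▸ le_inf le_sup_left hAT')

/-- If `C` is a complement of `B` over `D` only modulo `A`, then `C` or `A ⊔ C` is a genuine one. -/
theorem IsMinimalIdeal.exists_complement_of_sup_sup_eq_top [LieAlgebra.IsSolvable L]
    (hA : IsMinimalIdeal A) (hDB : D ≤ B) (hDC : D ≤ C) (hBC : B ⊓ C = D)
    (hABC : A ⊔ (B ⊔ C) = ⊤) : ∃ C', D ≤ C' ∧ B ⊓ C' = D ∧ B ⊔ C' = ⊤ := by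
  rcases hA.inf_eq_bot_or_le_of_sup_eq_top hABC with h | h
  · have hle : B ⊓ (A ⊔ C) ≤ C :=
      calc B ⊓ (A ⊔ C) ≤ (C ⊔ A) ⊓ (B ⊔ C) := by
            rw [sup_comm C A, inf_comm]; exact inf_le_inf_left _ le_sup_left
        _ = C ⊔ A ⊓ (B ⊔ C) := hA.2.1.sup_inf_assoc_of_le' le_sup_right
        _ = C := by rw [h, sup_bot_eq]
    refine ⟨A ⊔ C, hDC.trans le_sup_right, ?_, by rw [← hABC, sup_left_comm]⟩
    exact le_antisymm (hBC ▸ le_inf inf_le_left hle) (le_inf hDB (hDC.trans le_sup_right))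
  · exact ⟨C, hDC, hBC, by rwa [sup_eq_right.mpr h] at hABC⟩

theorem IsMinimalIdeal.isComplementedInterval_inf [LieAlgebra.IsSolvable L]
    (hA : IsMinimalIdeal A) (hS : IsComplementedInterval S) (hAS : A ≤ S) (hAM : A ⊔ M = ⊤) :
    IsComplementedInterval (S ⊓ M) := by
  have eq_sup_inf_of_le : ∀ {T}, A ≤ T → T = A ⊔ T ⊓ M := fun {T} hAT => by
    rw [inf_comm, ← hA.2.1.sup_inf_assoc_of_le M hAT, hAM, top_inf_eq]
  intro B hB
  obtain ⟨T, hST, hinf, hsup⟩ :=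
    hS (A ⊔ B) ((eq_sup_inf_of_le hAS).le.trans (sup_le_sup_left hB A))
  refine hA.exists_complement_of_sup_sup_eq_top hB (inf_le_inf_right M hST) ?_ ?_
  · refine le_antisymm ?_ (le_inf hB (inf_le_inf_right M hST))
    calc B ⊓ (T ⊓ M) = B ⊓ T ⊓ M := (inf_assoc _ _ _).symm
      _ ≤ (A ⊔ B) ⊓ T ⊓ M := inf_le_inf_right M (inf_le_inf_right T le_sup_right)
      _ = S ⊓ M := by rw [hinf]
  · refine top_unique (hsup ▸ sup_le (sup_le_sup_left le_sup_left A) ?_)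
    exact (eq_sup_inf_of_le (hAS.trans hST)).le.trans (sup_le_sup_left le_sup_right A)

theorem IsMinimalIdeal.not_le_of_mem_omegaMin [LieAlgebra.IsSolvable L]
    (hA : IsMinimalIdeal A) (hS : S ∈ OmegaMin U) (hM : IsCoatom M) (hUM : U ≤ M)
    (hAM : ¬ A ≤ M) : ¬ A ≤ S := by
  intro hAS
  have hAM_top : A ⊔ M = ⊤ := by
    rw [sup_comm]; exact codisjoint_iff.mp (hM.not_le_iff_codisjoint.mp hAM)
  have hSM : S ⊓ M = S :=
    hS.2 _ ⟨le_inf hS.1.1 hUM, hA.isComplementedInterval_inf hS.1.2 hAS hAM_top⟩ inf_le_left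
  exact hAM (hAS.trans (inf_eq_left.mp hSM))

theorem isComplementedInterval_top : IsComplementedInterval (⊤ : LieSubalgebra F L) :=
  fun _ hS => ⟨⊤, le_rfl, (inf_top_eq _).trans (top_le_iff.mp hS), sup_top_eq _⟩

theorem exists_mem_omegaMin [FiniteDimensional F L] (U : LieSubalgebra F L) :
    ∃ S, S ∈ OmegaMin U := by
  have : WellFoundedLT (LieSubalgebra F L) :=
    RelHomClass.isWellFounded (⟨LieSubalgebra.toSubmodule, fun h => h⟩ :
      ((· < ·) : LieSubalgebra F L → _ → Prop) →r (· < ·))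
  obtain ⟨S, hS, hmin⟩ :=
    wellFounded_lt.has_min (Omega U) ⟨⊤, le_top, isComplementedInterval_top⟩
  exact ⟨S, hS, fun T hT hTS => hTS.eq_of_not_lt (hmin T hT)⟩

end Paper

theorem stmt4 {F : Type*} [Field F] {L : Type*} [LieRing L] [LieAlgebra F L]
    [LieAlgebra.IsSolvable L] [FiniteDimensional F L]
    (A U : LieSubalgebra F L) (hA : Paper.IsMinimalIdeal A) :
    ((∃ S ∈ Paper.OmegaMin U, ¬ A ≤ S) ↔
      (∃ M : LieSubalgebra F L, IsCoatom M ∧ U ≤ M ∧ ¬ A ≤ M)) ∧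
    ((∃ M : LieSubalgebra F L, IsCoatom M ∧ U ≤ M ∧ ¬ A ≤ M) ↔
      (∀ S ∈ Paper.OmegaMin U, ∃ M : LieSubalgebra F L,
        A ⊔ M = ⊤ ∧ A ⊓ M = ⊥ ∧ S ≤ M)) := by
  have coatom_of_complement : ∀ S ∈ Paper.OmegaMin U, (∃ M, A ⊔ M = ⊤ ∧ A ⊓ M = ⊥ ∧ S ≤ M) →
      ∃ M : LieSubalgebra F L, IsCoatom M ∧ U ≤ M ∧ ¬ A ≤ M := by
    rintro S hS ⟨M, hsup, hinf, hSM⟩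
    refine ⟨M, hA.isCoatom_of_sup_eq_top_of_inf_eq_bot hsup hinf, hS.1.1.trans hSM, fun hAM => ?_⟩
    exact hA.1 (hinf ▸ (inf_eq_left.mpr hAM).symm)
  obtain ⟨S₀, hS₀⟩ := Paper.exists_mem_omegaMin U
  refine ⟨⟨fun ⟨S, hS, hAS⟩ => ?_, fun ⟨M, hM, hUM, hAM⟩ => ?_⟩,
    ⟨fun ⟨M, hM, hUM, hAM⟩ S hS => ?_, fun h => coatom_of_complement S₀ hS₀ (h S₀ hS₀)⟩⟩
  · exact coatom_of_complement S hS (hA.exists_complement_of_not_le hS.1.2 hAS)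
  · exact ⟨S₀, hS₀, hA.not_le_of_mem_omegaMin hS₀ hM hUM hAM⟩
  · exact hA.exists_complement_of_not_le hS.1.2 (hA.not_le_of_mem_omegaMin hS hM hUM hAM)
end

section
/- Let A₁ and A₂ be distinct minimal ideals of a solvable Lie algebra L and let U be a subalgebra. Then there is a bijection θ between the pairs of chief factors {A₁, (A₁+A₂)/A₁} and {A₂, (A₁+A₂)/A₂} such that corresponding chief factors have the same dimension and U-Frattini chief factors correspond to U-Frattini chief factors. -/
open LieAlgebra

namespace Paper

variable {F : Type*} [Field F] {L : Type*} [LieRing L] [LieAlgebra F L]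

/-- The dimension of the chief factor `A/B`. -/
noncomputable def factorDim (F : Type*) [Field F] {L : Type*} [LieRing L] [LieAlgebra F L]
    (B A : LieSubalgebra F L) : ℕ :=
  Module.finrank F A - Module.finrank F B

end Paper

/-!
A minimal ideal of a solvable Lie algebra is abelian, so a maximal subalgebra not containing it
is a complement to it. In terms of the maximal subalgebras `M ⊇ U`: `A/0` is `U`-Frattini iff
every such `M` contains `A`, and `(A₁+A₂)/A₂` is `U`-Frattini iff every such `M` containing `A₂`
contains `A₁`. The first property implies the second, so pairing `A₁` with `(A₁+A₂)/A₂` and `A₂`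
with `(A₁+A₂)/A₁` works unless, say, `(A₁+A₂)/A₂` is `U`-Frattini and `A₁` is not. Then some
maximal `M ⊇ U` complements both `A₁` and `A₂`, so `A₂` is not `U`-Frattini and
`dim A₁ = dim A₂`. Moreover `(A₁+A₂)/A₁` is `U`-Frattini: a maximal `M' ⊇ U + A₁` with `A₂ ⊄ M'`
would make `(M ∩ M') + A₂` a maximal subalgebra over `U + A₂` meeting `M'` only in `M ∩ M'`,
hence not containing `A₁`. So the identity pairing works.
-/

namespace Paper

variable {F : Type*} [Field F] {L : Type*} [LieRing L] [LieAlgebra F L]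

namespace IsIdealSubalg

variable {V W A : LieSubalgebra F L}

theorem sup_toSubmodule (hA : IsIdealSubalg A) :
    ((V ⊔ A : LieSubalgebra F L) : Submodule F L) = (V : Submodule F L) ⊔ A := by
  let S : LieSubalgebra F L :=
    { toSubmodule := (V : Submodule F L) ⊔ A
      lie_mem' := fun {x y} hx hy => by
        obtain ⟨v, hv, a, ha, rfl⟩ := Submodule.mem_sup.1 hx
        obtain ⟨w, hw, b, hb, rfl⟩ := Submodule.mem_sup.1 hy
        have hsplit : ⁅v + a, w + b⁆ = ⁅v, w⁆ + (⁅v, b⁆ - ⁅w + b, a⁆) := by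
          rw [add_lie, lie_add, ← lie_skew a, sub_eq_add_neg, add_assoc]
        rw [hsplit]
        exact Submodule.add_mem_sup (V.lie_mem hv hw) (sub_mem (hA v b hb) (hA _ a ha)) }
  refine le_antisymm ?_ ?_
  · exact (LieSubalgebra.toSubmodule_le_toSubmodule _ _).2 (show V ⊔ A ≤ S from
      sup_le (fun x hx => Submodule.mem_sup_left hx) (fun x hx => Submodule.mem_sup_right hx))
  · exact sup_le ((LieSubalgebra.toSubmodule_le_toSubmodule _ _).2 le_sup_left)
      ((LieSubalgebra.toSubmodule_le_toSubmodule _ _).2 le_sup_right)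

theorem mem_sup (hA : IsIdealSubalg A) {x : L} : x ∈ V ⊔ A ↔ ∃ v ∈ V, ∃ a ∈ A, v + a = x := by
  rw [← LieSubalgebra.mem_toSubmodule, hA.sup_toSubmodule, Submodule.mem_sup]
  rfl

theorem sup_inf_assoc_of_le_s8 (hA : IsIdealSubalg A) (h : V ≤ W) : (V ⊔ A) ⊓ W = V ⊔ A ⊓ W := by
  refine le_antisymm ?_ (le_inf (sup_le_sup_left inf_le_left V) (sup_le h inf_le_right))
  rintro x ⟨hx, hxW⟩
  obtain ⟨v, hv, a, ha, rfl⟩ := hA.mem_sup.1 hx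
  have haW : a ∈ W := by simpa using sub_mem hxW (h hv)
  exact add_mem ((le_sup_left : V ≤ V ⊔ A ⊓ W) hv) ((le_sup_right : A ⊓ W ≤ V ⊔ A ⊓ W) ⟨ha, haW⟩)

theorem inf_sup_assoc_of_le (hA : IsIdealSubalg A) (h : A ≤ W) : W ⊓ V ⊔ A = W ⊓ (V ⊔ A) := by
  refine le_antisymm (le_inf (sup_le inf_le_left h) (sup_le_sup_right inf_le_right A)) ?_
  rintro x ⟨hxW, hx⟩
  obtain ⟨v, hv, a, ha, rfl⟩ := hA.mem_sup.1 hx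
  have hvW : v ∈ W := by simpa using sub_mem hxW (h ha)
  exact hA.mem_sup.2 ⟨v, ⟨hvW, hv⟩, a, ha, rfl⟩

theorem finrank_sup [FiniteDimensional F L] (hA : IsIdealSubalg A) (h : V ⊓ A = ⊥) :
    Module.finrank F ↥(V ⊔ A) = Module.finrank F V + Module.finrank F A := by
  have hdim := Submodule.finrank_sup_add_finrank_inf_eq (V : Submodule F L) A
  rw [← LieSubalgebra.inf_toSubmodule, h, LieSubalgebra.bot_toSubmodule, finrank_bot,
    add_zero, ← hA.sup_toSubmodule] at hdim
  exact hdim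

theorem finrank_eq_of_isCompl [FiniteDimensional F L] {M A' : LieSubalgebra F L}
    (hA : IsIdealSubalg A) (hA' : IsIdealSubalg A') (h : IsCompl M A) (h' : IsCompl M A') :
    Module.finrank F A = Module.finrank F A' := by
  have hdim := hA.finrank_sup h.inf_eq_bot
  have hdim' := hA'.finrank_sup h'.inf_eq_bot
  rw [h.sup_eq_top, ← h'.sup_eq_top, hdim'] at hdim
  omega

end IsIdealSubalg

namespace IsMinimalIdeal

variable {A B M : LieSubalgebra F L}

theorem lie_eq_zero_s8 [IsSolvable L] (hA : IsMinimalIdeal A) {a b : L} (ha : a ∈ A)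
    (hb : b ∈ A) : ⁅a, b⁆ = 0 := by
  obtain ⟨hA₀, hAid, hAmin⟩ := hA
  obtain ⟨I, rfl⟩ := (LieSubalgebra.exists_lieIdeal_coe_eq_iff F A).2 hAid
  rcases hAmin (⁅I, I⁆ : LieIdeal F L) (fun x y hy => LieSubmodule.lie_mem _ hy)
      (LieSubmodule.lie_le_right I I) with h | h
  · have hab : ⁅a, b⁆ ∈ (⁅I, I⁆ : LieIdeal F L).toLieSubalgebra := LieSubmodule.lie_mem_lie ha hb
    rwa [h, LieSubalgebra.mem_bot] at hab
  · have hperf : ⁅I, I⁆ = I := LieSubmodule.ext _ _ fun x => SetLike.ext_iff.1 h x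
    have hD : ∀ k, derivedSeriesOfIdeal F L k I = I := fun k => by
      induction k with
      | zero => rfl
      | succ k ih => rw [derivedSeriesOfIdeal_succ, ih, hperf]
    obtain ⟨k, hk⟩ := IsSolvable.solvable (R := F) (L := L)
    have hI : I ≤ ⊥ := hD k ▸ hk ▸ derivedSeriesOfIdeal_le le_top le_rfl
    refine absurd (eq_bot_iff.2 fun x hx => ?_) hA₀
    exact (LieSubalgebra.mem_bot x).2 ((LieSubmodule.mem_bot x).1 (hI hx))

theorem inf_eq_bot (hA : IsMinimalIdeal A) (hB : IsMinimalIdeal B) (hne : A ≠ B) : A ⊓ B = ⊥ := by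
  have hAB : IsIdealSubalg (A ⊓ B) := fun x a ha => ⟨hA.2.1 x a ha.1, hB.2.1 x a ha.2⟩
  refine (hA.2.2 _ hAB inf_le_left).resolve_right fun h => ?_
  rcases hB.2.2 A hA.2.1 (inf_eq_left.1 h) with h' | h'
  exacts [hA.1 h', hne h']

theorem isCompl_of_isCoatom [IsSolvable L] (hA : IsMinimalIdeal A) (hM : IsCoatom M)
    (hAM : ¬ A ≤ M) : IsCompl M A := by
  have hMA : M ⊔ A = ⊤ := hM.2 _ (left_lt_sup.2 hAM)
  have hid : IsIdealSubalg (M ⊓ A) := by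
    intro x y hy
    obtain ⟨m, hm, a, ha, rfl⟩ := hA.2.1.mem_sup.1 (hMA ▸ LieSubalgebra.mem_top x)
    rw [add_lie, hA.lie_eq_zero_s8 ha hy.2, add_zero]
    exact ⟨M.lie_mem hm hy.1, hA.2.1 m y hy.2⟩
  refine IsCompl.of_eq ((hA.2.2 _ hid inf_le_right).resolve_right fun h => hAM ?_) hMA
  exact h ▸ inf_le_left

end IsMinimalIdeal

section Coatoms

variable {A M M' S : LieSubalgebra F L}

theorem inf_covBy_of_isCompl (hA : IsIdealSubalg A) (hMA : IsCompl M A) (hM' : IsCoatom M')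
    (hAM' : A ≤ M') : M ⊓ M' ⋖ M := by
  refine ⟨inf_lt_left.2 fun hMM' => hM'.1 (top_le_iff.1 ?_), fun T hT hTM => ?_⟩
  · exact hMA.sup_eq_top ▸ sup_le hMM' hAM'
  have hM'eq : M ⊓ M' ⊔ A = M' := by
    rw [inf_comm, hA.inf_sup_assoc_of_le hAM', hMA.sup_eq_top, inf_top_eq]
  have hTA : T ⊔ A = ⊤ := by
    refine hM'.2 _ (lt_of_le_of_ne (hM'eq ▸ sup_le_sup_right hT.le A) fun h => hT.not_ge ?_)
    exact le_inf hTM.le (h ▸ le_sup_left)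
  have hTeq : M = T := by
    rw [← top_inf_eq M, ← hTA, hA.sup_inf_assoc_of_le_s8 hTM.le, hMA.symm.inf_eq_bot, sup_bot_eq]
  exact hTM.ne hTeq.symm

theorem isCoatom_sup_of_covBy (hA : IsIdealSubalg A) (hMA : IsCompl M A) (hS : S ⋖ M) :
    IsCoatom (S ⊔ A) := by
  have hSA : (S ⊔ A) ⊓ M = S := by
    rw [hA.sup_inf_assoc_of_le_s8 hS.le, hMA.symm.inf_eq_bot, sup_bot_eq]
  refine ⟨fun h => hS.ne (by rwa [h, top_inf_eq, eq_comm] at hSA), fun Y hY => ?_⟩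
  rcases hS.eq_or_eq (hSA ▸ inf_le_inf_right M hY.le) inf_le_right with hYM | hYM
  · refine absurd ?_ hY.ne'
    rw [← hYM, hA.inf_sup_assoc_of_le (le_sup_right.trans hY.le), hMA.sup_eq_top, inf_top_eq]
  · exact top_le_iff.1 (hMA.sup_eq_top ▸ sup_le (inf_eq_right.1 hYM) (le_sup_right.trans hY.le))

end Coatoms

section UFrattini

variable {U A B : LieSubalgebra F L}

theorem isUFrattiniFactor_iff :
    IsUFrattiniFactor U B A ↔ ∀ M : LieSubalgebra F L, IsCoatom M → U ⊔ B ≤ M → A ≤ M := by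
  refine ⟨?_, fun h => ?_⟩
  · rintro (hA | hU) M hM hUM
    · exact hA.trans (sInf_le ⟨hM, hUM⟩)
    · exact absurd (top_le_iff.1 (hU ▸ hUM)) hM.1
  · by_cases hU : U ⊔ B = ⊤
    · exact Or.inr hU
    · exact Or.inl (le_sInf fun M hM => h M hM.1 hM.2)

theorem isUFrattiniFactor_bot_iff :
    IsUFrattiniFactor U ⊥ A ↔ ∀ M : LieSubalgebra F L, IsCoatom M → U ≤ M → A ≤ M := by
  rw [isUFrattiniFactor_iff, sup_bot_eq]

theorem isUFrattiniFactor_sup_iff :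
    IsUFrattiniFactor U B (A ⊔ B) ↔
      ∀ M : LieSubalgebra F L, IsCoatom M → U ≤ M → B ≤ M → A ≤ M := by
  rw [isUFrattiniFactor_iff]
  refine ⟨fun h M hM hUM hBM => le_sup_left.trans (h M hM (sup_le hUM hBM)),
    fun h M hM hUBM => ?_⟩
  have hBM := le_sup_right.trans hUBM
  exact sup_le (h M hM (le_sup_left.trans hUBM) hBM) hBM

theorem IsUFrattiniFactor.sup_of_bot (h : IsUFrattiniFactor U ⊥ A) :
    IsUFrattiniFactor U B (A ⊔ B) :=
  isUFrattiniFactor_sup_iff.2 fun M hM hUM _ => isUFrattiniFactor_bot_iff.1 h M hM hUM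

end UFrattini

theorem factorDim_bot (A : LieSubalgebra F L) : factorDim F ⊥ A = Module.finrank F A := by
  rw [factorDim, show Module.finrank F (⊥ : LieSubalgebra F L) = 0 from finrank_bot F L,
    Nat.sub_zero]

theorem isUFrattiniFactor_exchange [IsSolvable L] [FiniteDimensional F L]
    {U A₁ A₂ : LieSubalgebra F L} (hA₁ : IsMinimalIdeal A₁) (hA₂ : IsMinimalIdeal A₂)
    (hQ₂ : IsUFrattiniFactor U A₂ (A₁ ⊔ A₂)) (hP₁ : ¬ IsUFrattiniFactor U ⊥ A₁) :
    ¬ IsUFrattiniFactor U ⊥ A₂ ∧ IsUFrattiniFactor U A₁ (A₂ ⊔ A₁) ∧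
      Module.finrank F A₁ = Module.finrank F A₂ := by
  rw [isUFrattiniFactor_sup_iff] at hQ₂ ⊢
  rw [isUFrattiniFactor_bot_iff] at hP₁ ⊢
  push Not at hP₁
  obtain ⟨M, hM, hUM, hA₁M⟩ := hP₁
  have hA₂M : ¬ A₂ ≤ M := fun h => hA₁M (hQ₂ M hM hUM h)
  have hMA₁ := hA₁.isCompl_of_isCoatom hM hA₁M
  have hMA₂ := hA₂.isCompl_of_isCoatom hM hA₂M
  refine ⟨fun h => hA₂M (h M hM hUM), fun M' hM' hUM' hA₁M' => ?_,
    hA₁.2.1.finrank_eq_of_isCompl hA₂.2.1 hMA₁ hMA₂⟩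
  by_contra hA₂M'
  have hM'' : IsCoatom (M ⊓ M' ⊔ A₂) :=
    isCoatom_sup_of_covBy hA₂.2.1 hMA₂ (inf_covBy_of_isCompl hA₁.2.1 hMA₁ hM' hA₁M')
  have hA₁M'' : A₁ ≤ M ⊓ M' ⊔ A₂ :=
    hQ₂ _ hM'' (le_sup_of_le_left (le_inf hUM hUM')) le_sup_right
  have hM''M' : (M ⊓ M' ⊔ A₂) ⊓ M' = M ⊓ M' := by
    rw [hA₂.2.1.sup_inf_assoc_of_le_s8 inf_le_right,
      (hA₂.isCompl_of_isCoatom hM' hA₂M').symm.inf_eq_bot, sup_bot_eq]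
  exact hA₁M ((le_inf hA₁M'' hA₁M').trans (hM''M'.le.trans inf_le_left))

theorem isUFrattiniFactor_dichotomy [IsSolvable L] [FiniteDimensional F L]
    {U A₁ A₂ : LieSubalgebra F L} (hA₁ : IsMinimalIdeal A₁) (hA₂ : IsMinimalIdeal A₂) :
    ((IsUFrattiniFactor U ⊥ A₁ ↔ IsUFrattiniFactor U A₂ (A₁ ⊔ A₂)) ∧
        (IsUFrattiniFactor U A₁ (A₁ ⊔ A₂) ↔ IsUFrattiniFactor U ⊥ A₂)) ∨
      (¬ IsUFrattiniFactor U ⊥ A₁ ∧ ¬ IsUFrattiniFactor U ⊥ A₂ ∧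
        IsUFrattiniFactor U A₁ (A₁ ⊔ A₂) ∧ IsUFrattiniFactor U A₂ (A₁ ⊔ A₂) ∧
        Module.finrank F A₁ = Module.finrank F A₂) := by
  by_cases h₁ : IsUFrattiniFactor U A₂ (A₁ ⊔ A₂) ∧ ¬ IsUFrattiniFactor U ⊥ A₁
  · obtain ⟨hP₂, hQ₁, hd⟩ := isUFrattiniFactor_exchange hA₁ hA₂ h₁.1 h₁.2
    exact Or.inr ⟨h₁.2, hP₂, sup_comm A₂ A₁ ▸ hQ₁, h₁.1, hd⟩
  by_cases h₂ : IsUFrattiniFactor U A₁ (A₁ ⊔ A₂) ∧ ¬ IsUFrattiniFactor U ⊥ A₂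
  · obtain ⟨hP₁, hQ₂, hd⟩ := isUFrattiniFactor_exchange hA₂ hA₁ (sup_comm A₁ A₂ ▸ h₂.1) h₂.2
    exact Or.inr ⟨hP₁, h₂.2, h₂.1, hQ₂, hd.symm⟩
  refine Or.inl ⟨⟨IsUFrattiniFactor.sup_of_bot, fun hQ₂ => not_not.1 fun hP₁ => h₁ ⟨hQ₂, hP₁⟩⟩,
    ⟨fun hQ₁ => not_not.1 fun hP₂ => h₂ ⟨hQ₁, hP₂⟩, fun hP₂ => sup_comm A₂ A₁ ▸ hP₂.sup_of_bot⟩⟩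

end Paper

theorem stmt8 {F : Type*} [Field F] {L : Type*} [LieRing L] [LieAlgebra F L]
    [LieAlgebra.IsSolvable L] [FiniteDimensional F L]
    (A₁ A₂ U : LieSubalgebra F L)
    (hA₁ : Paper.IsMinimalIdeal A₁) (hA₂ : Paper.IsMinimalIdeal A₂) (hne : A₁ ≠ A₂)
    (C₁ C₂ : Fin 3 → LieSubalgebra F L)
    (hC₁ : C₁ = ![⊥, A₁, A₁ ⊔ A₂]) (hC₂ : C₂ = ![⊥, A₂, A₁ ⊔ A₂]) :
    ∃ θ : Equiv.Perm (Fin 2), ∀ i : Fin 2,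
      Paper.factorDim F (C₁ i.castSucc) (C₁ i.succ)
        = Paper.factorDim F (C₂ (θ i).castSucc) (C₂ (θ i).succ) ∧
      (Paper.IsUFrattiniFactor U (C₁ i.castSucc) (C₁ i.succ) ↔
        Paper.IsUFrattiniFactor U (C₂ (θ i).castSucc) (C₂ (θ i).succ)) := by
  subst hC₁ hC₂
  have hsum := hA₂.2.1.finrank_sup (hA₁.inf_eq_bot hA₂ hne)
  have hdim₁ : Paper.factorDim F A₁ (A₁ ⊔ A₂) = Module.finrank F A₂ := by
    rw [Paper.factorDim, hsum]; omega
  have hdim₂ : Paper.factorDim F A₂ (A₁ ⊔ A₂) = Module.finrank F A₁ := by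
    rw [Paper.factorDim, hsum]; omega
  rcases Paper.isUFrattiniFactor_dichotomy (U := U) hA₁ hA₂ with
    ⟨hPQ₁, hPQ₂⟩ | ⟨hP₁, hP₂, hQ₁, hQ₂, hd⟩
  · exact ⟨Equiv.swap 0 1, by
      simp [Fin.forall_fin_two, Paper.factorDim_bot, hdim₁, hdim₂, hPQ₁, hPQ₂]⟩
  · exact ⟨Equiv.refl _, by
      simp [Fin.forall_fin_two, Paper.factorDim_bot, hdim₁, hdim₂, hP₁, hP₂, hQ₁, hQ₂, hd]⟩
end

section
/- Let L be a finite-dimensional solvable Lie algebra, U a subalgebra, and let 0 < A₁ < … < A_n = L and 0 < B₁ < … < B_n = L be two chief series of L. Then there is a bijection between the chief factors of the two series such that corresponding factors have the same dimension and U-Frattini chief factors correspond to U-Frattini chief factors. -/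
open LieAlgebra

/-!
Chief series of `L` are the saturated chains from `⊥` to `⊤` in the modular lattice of ideals, so
the Jordan–Hölder diamond argument shows that the multiset of (dimension, `U`-Frattini) data of the
factors does not depend on the series, provided that for two distinct covers `X`, `Y` of an ideal
`K` the factors `X/K`, `(X+Y)/X` match the factors `Y/K`, `(X+Y)/Y` either crosswise or straight.

Dimensions always match crosswise, and a factor lying over a `U`-Frattini factor is again
`U`-Frattini. The remaining case is `X/K` not `U`-Frattini, witnessed by a maximal subalgebra
`M ⊇ U + K` with `X ⊈ M`, while `(X+Y)/Y` is `U`-Frattini. Then `Y ⊈ M` as well; since chief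
factors of a solvable algebra are abelian, `M` complements both `X/K` and `Y/K`. Hence
`dim X = dim Y`, `Y/K` is not `U`-Frattini, and a modular-law argument with `(M ∩ M') + Y` shows
that `(X+Y)/X` is `U`-Frattini, so the straight matching works.
-/

open Module

theorem inf_eq_of_covBy_of_covBy {α : Type*} [SemilatticeInf α] {K X Y : α} (hX : K ⋖ X)
    (hY : K ⋖ Y) (hXY : X ≠ Y) : X ⊓ Y = K := by
  refine (hX.eq_or_eq (le_inf hX.le hY.le) inf_le_left).resolve_right fun h => hXY ?_
  exact (hY.eq_or_eq hX.le (h ▸ inf_le_right)).resolve_left hX.ne'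

theorem Fintype.exists_perm_of_map_univ_eq {ι β : Type*} [Fintype ι] {g h : ι → β}
    (H : Finset.univ.val.map g = Finset.univ.val.map h) :
    ∃ σ : Equiv.Perm ι, ∀ i, g i = h (σ i) := by
  classical
  have hfib : ∀ b, Fintype.card {i // g i = b} = Fintype.card {i // h i = b} := by
    intro b
    simpa [Fintype.card_subtype, Multiset.count_map, Finset.card_def, Finset.filter_val,
      eq_comm] using congrArg (Multiset.count b) H
  exact ⟨Equiv.ofFiberEquiv fun b => Fintype.equivOfCardEq (hfib b),
    fun i => (Equiv.ofFiberEquiv_map (f := g) _ i).symm⟩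

section SaturatedChain

def chainFactors {α β : Type*} (f : α → α → β) (s : ℕ → α) (n : ℕ) : Multiset β :=
  (Multiset.range n).map fun i => f (s i) (s (i + 1))

theorem chainFactors_succ {α β : Type*} (f : α → α → β) (s : ℕ → α) (n : ℕ) :
    chainFactors f s (n + 1) = f (s 0) (s 1) ::ₘ chainFactors f (fun i => s (i + 1)) n := by
  simp only [chainFactors, ← Multiset.coe_range, List.range_succ_eq_map, Multiset.map_coe,
    List.map_cons, List.map_map, Multiset.cons_coe]
  rfl

theorem chainFactors_eq_map_univ {α β : Type*} (f : α → α → β) (s : ℕ → α) (n : ℕ) :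
    chainFactors f s n = Finset.univ.val.map fun i : Fin n => f (s i) (s (i + 1)) := by
  rw [chainFactors, Fin.univ_val_map, List.ofFn_eq_map, ← Multiset.coe_range,
    ← List.map_coe_finRange_eq_range, Multiset.map_coe, List.map_map]
  rfl

variable {α : Type*} [PartialOrder α] [OrderTop α]

def IsSaturatedChainToTop (s : ℕ → α) (n : ℕ) : Prop :=
  (∀ i < n, s i ⋖ s (i + 1)) ∧ s n = ⊤

namespace IsSaturatedChainToTop

variable {s : ℕ → α} {n : ℕ}

theorem eq_zero_iff (hs : IsSaturatedChainToTop s n) : n = 0 ↔ s 0 = ⊤ := by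
  refine ⟨fun hn => hn ▸ hs.2, fun h0 => ?_⟩
  by_contra hn
  exact (hs.1 0 (Nat.pos_of_ne_zero hn)).lt.not_ge (h0 ▸ le_top)

theorem tail (hs : IsSaturatedChainToTop s (n + 1)) :
    IsSaturatedChainToTop (fun i => s (i + 1)) n :=
  ⟨fun i hi => hs.1 (i + 1) (by omega), hs.2⟩

theorem cons {a : α} (hs : IsSaturatedChainToTop s n) (ha : a ⋖ s 0) :
    IsSaturatedChainToTop (fun | 0 => a | i + 1 => s i) (n + 1) := by
  refine ⟨fun i hi => ?_, hs.2⟩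
  cases i with
  | zero => exact ha
  | succ i => exact hs.1 i (by omega)

end IsSaturatedChainToTop

theorem exists_isSaturatedChainToTop [WellFoundedGT α] [IsStronglyAtomic α] (a : α) :
    ∃ (s : ℕ → α) (n : ℕ), s 0 = a ∧ IsSaturatedChainToTop s n := by
  induction a using WellFoundedGT.induction with
  | _ a ih =>
  by_cases ha : a = ⊤
  · exact ⟨fun _ => a, 0, rfl, fun _ h => absurd h (Nat.not_lt_zero _), ha⟩
  obtain ⟨b, hab, -⟩ := exists_covBy_le_of_lt (lt_top_iff_ne_top.2 ha)
  obtain ⟨s, n, rfl, hs⟩ := ih _ hab.lt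
  exact ⟨_, n + 1, rfl, hs.cons hab⟩

end SaturatedChain

/-- Jordan–Hölder for an invariant `f` of covering pairs: `hf` asks that the two factors below
and the two factors above any diamond `K ⋖ X, Y ⋖ X ⊔ Y` match crosswise or straight. -/
theorem chainFactors_eq {α β : Type*} [Lattice α] [OrderTop α] [IsUpperModularLattice α]
    [WellFoundedGT α] [IsStronglyAtomic α] (f : α → α → β)
    (hf : ∀ ⦃K X Y⦄, K ⋖ X → K ⋖ Y → X ≠ Y →
      f K X = f Y (X ⊔ Y) ∧ f X (X ⊔ Y) = f K Y ∨ f K X = f K Y ∧ f X (X ⊔ Y) = f Y (X ⊔ Y))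
    {s t : ℕ → α} {m n : ℕ} (h0 : s 0 = t 0)
    (hs : IsSaturatedChainToTop s m) (ht : IsSaturatedChainToTop t n) :
    chainFactors f s m = chainFactors f t n := by
  induction hK : s 0 using WellFoundedGT.induction generalizing s t m n with
  | _ K ih =>
  by_cases hKtop : K = ⊤
  · rw [hs.eq_zero_iff.2 (hK ▸ hKtop), ht.eq_zero_iff.2 (h0 ▸ hK ▸ hKtop)]
    rfl
  obtain ⟨m, rfl⟩ := Nat.exists_eq_succ_of_ne_zero fun h => hKtop (hK ▸ hs.eq_zero_iff.1 h)
  obtain ⟨n, rfl⟩ := Nat.exists_eq_succ_of_ne_zero fun h => hKtop (hK ▸ h0 ▸ ht.eq_zero_iff.1 h)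
  rw [chainFactors_succ, chainFactors_succ, ← h0, hK]
  have hX : K ⋖ s 1 := hK ▸ hs.1 0 (Nat.succ_pos _)
  have hY : K ⋖ t 1 := hK ▸ h0 ▸ ht.1 0 (Nat.succ_pos _)
  by_cases hXY : s 1 = t 1
  · rw [hXY, ih _ hY.lt hXY hs.tail ht.tail hXY]
  -- compare each series with a common one through `s 1 ⊔ t 1`
  obtain ⟨u, k, hu0, hu⟩ := exists_isSaturatedChainToTop (s 1 ⊔ t 1)
  have hXZ : s 1 ⋖ s 1 ⊔ t 1 :=
    covBy_sup_of_inf_covBy_right (inf_eq_of_covBy_of_covBy hX hY hXY ▸ hY)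
  have hYZ : t 1 ⋖ s 1 ⊔ t 1 :=
    sup_comm (t 1) (s 1) ▸
      covBy_sup_of_inf_covBy_right (inf_eq_of_covBy_of_covBy hY hX (Ne.symm hXY) ▸ hX)
  rw [ih _ hX.lt (by rfl) hs.tail (hu.cons (hu0 ▸ hXZ)) rfl,
    ih _ hY.lt (by rfl) ht.tail (hu.cons (hu0 ▸ hYZ)) rfl, chainFactors_succ, chainFactors_succ]
  simp only [hu0]
  rcases hf hX hY hXY with ⟨h1, h2⟩ | ⟨h1, h2⟩
  · rw [h1, h2, Multiset.cons_swap]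
  · rw [h1, h2]

section LieIdealSubalgebra

variable {R L : Type*} [CommRing R] [LieRing L] [LieAlgebra R L]

namespace LieIdeal

theorem coe_injective : Function.Injective ((↑) : LieIdeal R L → LieSubalgebra R L) :=
  fun _ _ h => by ext x; exact SetLike.ext_iff.1 h x

theorem coe_le_coe {I J : LieIdeal R L} : (I : LieSubalgebra R L) ≤ J ↔ I ≤ J :=
  Iff.rfl

theorem coe_bot : ((⊥ : LieIdeal R L) : LieSubalgebra R L) = ⊥ := by
  ext; simp

end LieIdeal

namespace LieSubalgebra

theorem toSubmodule_sup_lieIdeal (S : LieSubalgebra R L) (I : LieIdeal R L) :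
    (S ⊔ I).toSubmodule = S.toSubmodule ⊔ LieSubmodule.toSubmodule I := by
  let P : LieSubalgebra R L :=
    { S.toSubmodule ⊔ LieSubmodule.toSubmodule I with
      lie_mem' := fun {x y} hx hy => by
        obtain ⟨s, hs, i, hi, rfl⟩ := Submodule.mem_sup.1 hx
        obtain ⟨s', hs', i', hi', rfl⟩ := Submodule.mem_sup.1 hy
        rw [add_lie, lie_add, add_assoc]
        exact Submodule.add_mem_sup (S.lie_mem hs hs')
          (add_mem (I.lie_mem hi') (lie_mem_left R L I _ _ hi)) }
  refine le_antisymm ?_ (sup_le ((toSubmodule_le_toSubmodule _ _).2 le_sup_left)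
    ((toSubmodule_le_toSubmodule (I : LieSubalgebra R L) _).2 le_sup_right))
  exact (toSubmodule_le_toSubmodule _ P).2 (sup_le (fun x hx => Submodule.mem_sup_left hx)
    fun x hx => Submodule.mem_sup_right hx)

theorem mem_sup_lieIdeal {S : LieSubalgebra R L} {I : LieIdeal R L} {x : L} :
    x ∈ S ⊔ I ↔ ∃ s ∈ S, ∃ i ∈ I, s + i = x := by
  rw [← mem_toSubmodule, toSubmodule_sup_lieIdeal, Submodule.mem_sup]
  rfl

theorem sup_lieIdeal_inf_of_le {S T : LieSubalgebra R L} (I : LieIdeal R L) (h : S ≤ T) :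
    (S ⊔ I) ⊓ T = S ⊔ (I ⊓ T) := by
  refine le_antisymm (fun x ⟨hx, hxT⟩ => ?_)
    (sup_le (le_inf le_sup_left h) (inf_le_inf_right _ le_sup_right))
  obtain ⟨s, hs, i, hi, rfl⟩ := mem_sup_lieIdeal.1 hx
  have hiT : i ∈ T := by simpa using T.sub_mem hxT (h hs)
  exact add_mem (le_sup_left (a := S) hs)
    (le_sup_right (b := (I : LieSubalgebra R L) ⊓ T) ⟨hi, hiT⟩)

theorem sup_lieIdeal_inf_of_lieIdeal_le (S : LieSubalgebra R L) {T : LieSubalgebra R L}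
    {I : LieIdeal R L} (h : (I : LieSubalgebra R L) ≤ T) :
    (S ⊔ I) ⊓ T = (S ⊓ T) ⊔ I := by
  refine le_antisymm (fun x ⟨hx, hxT⟩ => ?_)
    (sup_le (inf_le_inf_right _ le_sup_left) (le_inf le_sup_right h))
  obtain ⟨s, hs, i, hi, rfl⟩ := mem_sup_lieIdeal.1 hx
  have hsT : s ∈ T := by simpa using T.sub_mem hxT (h hi)
  exact add_mem (le_sup_left (b := (I : LieSubalgebra R L)) ⟨hs, hsT⟩)
    (le_sup_right (a := S ⊓ T) hi)

end LieSubalgebra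

theorem LieIdeal.coe_sup (X Y : LieIdeal R L) :
    ((X ⊔ Y : LieIdeal R L) : LieSubalgebra R L) = (X : LieSubalgebra R L) ⊔ Y := by
  rw [← LieSubalgebra.toSubmodule_inj, LieSubalgebra.toSubmodule_sup_lieIdeal]
  exact LieSubmodule.sup_toSubmodule X Y

variable [IsSolvable L]

theorem LieIdeal.lie_le_of_covBy {K X : LieIdeal R L} (h : K ⋖ X) : ⁅X, X⁆ ≤ K := by
  by_contra hXK
  have hX : X = K ⊔ ⁅X, X⁆ :=
    ((h.eq_or_eq le_sup_left (sup_le h.le (LieSubmodule.lie_le_right X X))).resolve_left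
      fun e => hXK (e ▸ le_sup_right)).symm
  have hle : ∀ k, X ≤ K ⊔ derivedSeriesOfIdeal R L k X := by
    intro k
    induction k with
    | zero => exact le_sup_right
    | succ k ih =>
      calc X = K ⊔ ⁅X, X⁆ := hX
        _ ≤ K ⊔ ⁅K ⊔ derivedSeriesOfIdeal R L k X, K ⊔ derivedSeriesOfIdeal R L k X⁆ :=
          sup_le_sup_left (LieSubmodule.mono_lie ih ih) _
        _ ≤ K ⊔ derivedSeriesOfIdeal R L (k + 1) X := by
          rw [derivedSeriesOfIdeal_succ, LieSubmodule.sup_lie, LieSubmodule.lie_sup,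
            LieSubmodule.lie_sup]
          refine sup_le le_sup_left (sup_le (sup_le ?_ ?_) (sup_le ?_ le_sup_right))
          · exact (LieSubmodule.lie_le_right _ _).trans le_sup_left
          · exact (LieSubmodule.lie_le_left _ _).trans le_sup_left
          · exact (LieSubmodule.lie_le_right _ _).trans le_sup_left
  obtain ⟨k, hk⟩ := IsSolvable.solvable R L
  have hbot : derivedSeriesOfIdeal R L k X = ⊥ :=
    eq_bot_iff.2 (hk ▸ derivedSeriesOfIdeal_mono le_top k)
  exact h.lt.not_ge (by simpa [hbot] using hle k)

theorem LieIdeal.inf_eq_of_covBy_of_not_le {M : LieSubalgebra R L} (hM : IsCoatom M)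
    {K X : LieIdeal R L} (h : K ⋖ X) (hKM : (K : LieSubalgebra R L) ≤ M)
    (hXM : ¬ (X : LieSubalgebra R L) ≤ M) : (X : LieSubalgebra R L) ⊓ M = K := by
  have hsup : M ⊔ X = ⊤ := codisjoint_iff.1 (hM.not_le_iff_codisjoint.1 hXM)
  let J : LieIdeal R L :=
    { LieSubmodule.toSubmodule X ⊓ M.toSubmodule with
      lie_mem := fun {z v} hv => by
        obtain ⟨m, hm, x, hx, rfl⟩ :=
          LieSubalgebra.mem_sup_lieIdeal.1 (hsup ▸ trivial : z ∈ M ⊔ X)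
        have hxv : ⁅x, v⁆ ∈ K := lie_le_of_covBy h (LieSubmodule.lie_mem_lie hx hv.1)
        rw [add_lie]
        exact add_mem (Submodule.mem_inf.2 ⟨lie_mem_right R L X m v hv.1, M.lie_mem hm hv.2⟩)
          (Submodule.mem_inf.2 ⟨h.le hxv, hKM hxv⟩) }
  have hKJ : K ≤ J := fun x hx => Submodule.mem_inf.2 ⟨h.le hx, hKM hx⟩
  rcases h.eq_or_eq hKJ (fun x hx => (Submodule.mem_inf.1 hx).1) with hJ | hJ
  · ext x
    exact SetLike.ext_iff.1 hJ x
  · exact absurd (fun x hx => (Submodule.mem_inf.1 (hJ ▸ hx : x ∈ J)).2) hXM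

end LieIdealSubalgebra

namespace Paper

variable {F L : Type*} [Field F] [LieRing L] [LieAlgebra F L]

theorem le_phi_iff {U A : LieSubalgebra F L} :
    A ≤ phi U ↔ ∀ M : LieSubalgebra F L, IsCoatom M → U ≤ M → A ≤ M := by
  simp [phi, le_sInf_iff, and_imp]

theorem not_isUFrattiniFactor_iff {U B A : LieSubalgebra F L} :
    ¬ IsUFrattiniFactor U B A ↔
      U ⊔ B ≠ ⊤ ∧ ∃ M : LieSubalgebra F L, IsCoatom M ∧ U ⊔ B ≤ M ∧ ¬ A ≤ M := by
  simp [IsUFrattiniFactor, le_phi_iff, and_comm, and_assoc]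

theorem IsUFrattiniFactor.sup_right {U B A C : LieSubalgebra F L}
    (h : IsUFrattiniFactor U B A) (hBC : B ≤ C) : IsUFrattiniFactor U C (A ⊔ C) := by
  rcases h with h | h
  · refine Or.inl (le_phi_iff.2 fun M hM hUCM => sup_le ?_ (le_sup_right.trans hUCM))
    exact h.trans (le_phi_iff.1 le_rfl M hM ((sup_le_sup_left hBC U).trans hUCM))
  · exact Or.inr (top_le_iff.1 (h ▸ sup_le_sup_left hBC U))

theorem IsChiefSeries.exists_lieIdeal {A : ℕ → LieSubalgebra F L} {n : ℕ}
    (hA : IsChiefSeries A n) : ∃ I : ℕ → LieIdeal F L,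
      (∀ i, (I i : LieSubalgebra F L) = A i) ∧ I 0 = ⊥ ∧ IsSaturatedChainToTop I n := by
  obtain ⟨hA0, hAn, hideal, hstep⟩ := hA
  choose I hI using fun i =>
    (LieSubalgebra.exists_lieIdeal_coe_eq_iff F (A i)).2 fun x y hy => hideal i x y hy
  refine ⟨I, hI, LieIdeal.coe_injective (by rw [hI, hA0, LieIdeal.coe_bot]), fun i hi => ?_,
    LieIdeal.coe_injective (by rw [hI, hAn, LieIdeal.top_toLieSubalgebra])⟩
  obtain ⟨hlt, hmax⟩ := hstep i hi
  refine covBy_of_eq_or_eq (by rwa [← hI, ← hI] at hlt) fun J hIJ hJI => ?_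
  have hJ := hmax J (fun x y hy => lie_mem_right F L J x y hy) (hI i ▸ LieIdeal.coe_le_coe.2 hIJ)
    (hI (i + 1) ▸ LieIdeal.coe_le_coe.2 hJI)
  rw [← hI, ← hI] at hJ
  exact hJ.imp (fun h => LieIdeal.coe_injective h) fun h => LieIdeal.coe_injective h

noncomputable def chiefFactorData (U : LieSubalgebra F L) (B A : LieIdeal F L) : ℕ × Prop :=
  (factorDim F (B : LieSubalgebra F L) A, IsUFrattiniFactor U B A)

theorem sup_eq_top_swap_of_complement {U M : LieSubalgebra F L} {K X Y : LieIdeal F L}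
    (hUKM : U ⊔ K ≤ M) (hKX : K ≤ X) (hKY : K ≤ Y) (hMX : M ⊔ X = ⊤)
    (hYM : (Y : LieSubalgebra F L) ⊓ M = K) (hUY : U ⊔ Y = ⊤) : U ⊔ X = ⊤ := by
  have hM : M = U ⊔ K :=
    calc M = (U ⊔ K ⊔ Y) ⊓ M := by
          rw [sup_assoc, sup_eq_right.2 (LieIdeal.coe_le_coe.2 hKY), hUY,
            top_inf_eq]
      _ = U ⊔ K ⊔ (Y ⊓ M) := LieSubalgebra.sup_lieIdeal_inf_of_le Y hUKM
      _ = U ⊔ K := by rw [hYM, sup_assoc, sup_idem]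
  rw [eq_top_iff, ← hMX]
  exact sup_le (hM.trans_le (sup_le_sup_left (LieIdeal.coe_le_coe.2 hKX) U)) le_sup_right

variable [FiniteDimensional F L]

theorem finrank_add_finrank_eq_of_sup_eq_top {M S : LieSubalgebra F L} {I : LieIdeal F L}
    (hsup : M ⊔ I = ⊤) (hinf : (I : LieSubalgebra F L) ⊓ M = S) :
    finrank F M + finrank F (I : LieSubalgebra F L) = finrank F L + finrank F S := by
  have h :=
    Submodule.finrank_sup_add_finrank_inf_eq M.toSubmodule (I : LieSubalgebra F L).toSubmodule
  rw [inf_comm, ← LieSubalgebra.inf_toSubmodule, hinf, LieIdeal.toLieSubalgebra_toSubmodule,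
    ← LieSubalgebra.toSubmodule_sup_lieIdeal, hsup, LieSubalgebra.top_toSubmodule, finrank_top] at h
  exact h.symm

theorem factorDim_inf_sup (X Y : LieIdeal F L) :
    factorDim F ((X ⊓ Y : LieIdeal F L) : LieSubalgebra F L) X =
      factorDim F Y ((X ⊔ Y : LieIdeal F L) : LieSubalgebra F L) := by
  have h := Submodule.finrank_sup_add_finrank_inf_eq (LieSubmodule.toSubmodule X)
    (LieSubmodule.toSubmodule Y)
  rw [← LieSubmodule.sup_toSubmodule, ← LieSubmodule.inf_toSubmodule] at h
  have hinf := Submodule.finrank_mono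
    ((LieSubmodule.toSubmodule_le_toSubmodule (X ⊓ Y) X).2 inf_le_left)
  have hsup := Submodule.finrank_mono
    ((LieSubmodule.toSubmodule_le_toSubmodule Y (X ⊔ Y)).2 le_sup_right)
  change finrank F (LieSubmodule.toSubmodule X) - finrank F (LieSubmodule.toSubmodule (X ⊓ Y)) =
    finrank F (LieSubmodule.toSubmodule (X ⊔ Y)) - finrank F (LieSubmodule.toSubmodule Y)
  omega

variable [IsSolvable L]

theorem sup_le_phi_sup_swap_of_complement {U M : LieSubalgebra F L} {K X Y : LieIdeal F L}
    (hUKM : U ⊔ K ≤ M) (hX : K ⋖ X) (hY : K ⋖ Y) (hMX : M ⊔ X = ⊤)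
    (hXM : (X : LieSubalgebra F L) ⊓ M = K) (hC : (X : LieSubalgebra F L) ⊔ Y ≤ phi (U ⊔ Y)) :
    (X : LieSubalgebra F L) ⊔ Y ≤ phi (U ⊔ X) := by
  refine le_phi_iff.2 fun M' hM' hUXM' => ?_
  have hXM' : (X : LieSubalgebra F L) ≤ M' := le_sup_right.trans hUXM'
  refine sup_le hXM' (by_contra fun hYM' => ?_)
  have hKM : (K : LieSubalgebra F L) ≤ M := le_sup_right.trans hUKM
  have hKM' : (K : LieSubalgebra F L) ≤ M' := (LieIdeal.coe_le_coe.2 hX.le).trans hXM'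
  have hM'Y : M' ⊔ Y = ⊤ := codisjoint_iff.1 (hM'.not_le_iff_codisjoint.1 hYM')
  set N := M ⊓ M' ⊔ Y
  have hNM' : N ⊓ M' = M ⊓ M' := by
    rw [LieSubalgebra.sup_lieIdeal_inf_of_le Y inf_le_right,
      LieIdeal.inf_eq_of_covBy_of_not_le hM' hY hKM' hYM', sup_eq_left.2 (le_inf hKM hKM')]
  have hNX : N ⊓ X ≤ K :=
    calc N ⊓ X ≤ N ⊓ M' ⊓ X := le_inf (inf_le_inf_left _ hXM') inf_le_right
      _ ≤ (X : LieSubalgebra F L) ⊓ M := by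
        rw [hNM']
        exact le_inf inf_le_right (inf_le_left.trans inf_le_left)
      _ = K := hXM
  have hN : N ≠ ⊤ := by
    intro hN
    rw [hN, top_inf_eq] at hNX
    exact hX.lt.not_ge hNX
  obtain ⟨M'', hM'', hNM''⟩ := (eq_top_or_exists_le_coatom N).resolve_left hN
  have hUN : U ≤ N := (le_inf (le_sup_left.trans hUKM) (le_sup_left.trans hUXM')).trans le_sup_left
  have hYN : (Y : LieSubalgebra F L) ≤ N := le_sup_right
  have hUYM'' : U ⊔ Y ≤ M'' := sup_le (hUN.trans hNM'') (hYN.trans hNM'')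
  have hXM'' : (X : LieSubalgebra F L) ≤ M'' :=
    le_sup_left.trans (hC.trans (le_phi_iff.1 le_rfl M'' hM'' hUYM''))
  have hM'N : M' ≤ N ⊔ X :=
    calc M' = (M ⊔ X) ⊓ M' := by rw [hMX, top_inf_eq]
      _ = M ⊓ M' ⊔ X := LieSubalgebra.sup_lieIdeal_inf_of_lieIdeal_le M hXM'
      _ ≤ N ⊔ X := sup_le_sup_right le_sup_left _
  refine hM''.1 (top_le_iff.1 ?_)
  rw [← hM'Y]
  exact sup_le (hM'N.trans (sup_le hNM'' hXM'')) (hYN.trans hNM'')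

theorem diamond_straight_of_not_isUFrattiniFactor {U : LieSubalgebra F L} {K X Y : LieIdeal F L}
    (hX : K ⋖ X) (hY : K ⋖ Y) (hKX : ¬ IsUFrattiniFactor U K X)
    (hYC : IsUFrattiniFactor U Y ((X : LieSubalgebra F L) ⊔ Y)) :
    factorDim F (K : LieSubalgebra F L) X = factorDim F (K : LieSubalgebra F L) Y ∧
      ¬ IsUFrattiniFactor U K Y ∧
      IsUFrattiniFactor U X ((X : LieSubalgebra F L) ⊔ Y) := by
  obtain ⟨hUK, M, hM, hUKM, hXM⟩ := not_isUFrattiniFactor_iff.1 hKX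
  have hKM : (K : LieSubalgebra F L) ≤ M := le_sup_right.trans hUKM
  have hYM : ¬ (Y : LieSubalgebra F L) ≤ M := by
    intro hYM
    have hUYM : U ⊔ Y ≤ M := sup_le (le_sup_left.trans hUKM) hYM
    rcases hYC with hC | hC
    · exact hXM (le_sup_left.trans (hC.trans (le_phi_iff.1 le_rfl M hM hUYM)))
    · exact hM.1 (top_le_iff.1 (hC ▸ hUYM))
  have hMX : M ⊔ X = ⊤ := codisjoint_iff.1 (hM.not_le_iff_codisjoint.1 hXM)
  have hMY : M ⊔ Y = ⊤ := codisjoint_iff.1 (hM.not_le_iff_codisjoint.1 hYM)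
  have hXM' := LieIdeal.inf_eq_of_covBy_of_not_le hM hX hKM hXM
  have hYM' := LieIdeal.inf_eq_of_covBy_of_not_le hM hY hKM hYM
  refine ⟨?_, not_isUFrattiniFactor_iff.2 ⟨hUK, M, hM, hUKM, hYM⟩, ?_⟩
  · have h1 := finrank_add_finrank_eq_of_sup_eq_top hMX hXM'
    have h2 := finrank_add_finrank_eq_of_sup_eq_top hMY hYM'
    unfold factorDim
    omega
  · rcases hYC with hC | hC
    · exact Or.inl (sup_le_phi_sup_swap_of_complement hUKM hX hY hMX hXM' hC)
    · exact Or.inr (sup_eq_top_swap_of_complement hUKM hX.le hY.le hMX hYM' hC)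

theorem chiefFactorData_diamond (U : LieSubalgebra F L) {K X Y : LieIdeal F L}
    (hX : K ⋖ X) (hY : K ⋖ Y) (hXY : X ≠ Y) :
    chiefFactorData U K X = chiefFactorData U Y (X ⊔ Y) ∧
        chiefFactorData U X (X ⊔ Y) = chiefFactorData U K Y ∨
      chiefFactorData U K X = chiefFactorData U K Y ∧
        chiefFactorData U X (X ⊔ Y) = chiefFactorData U Y (X ⊔ Y) := by
  have hK := inf_eq_of_covBy_of_covBy hX hY hXY
  have hdX := factorDim_inf_sup X Y
  have hdY := factorDim_inf_sup Y X
  rw [hK] at hdX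
  rw [inf_comm, hK, sup_comm] at hdY
  have upX (h : IsUFrattiniFactor U K X) : IsUFrattiniFactor U Y ((X : LieSubalgebra F L) ⊔ Y) :=
    h.sup_right (LieIdeal.coe_le_coe.2 hY.le)
  have upY (h : IsUFrattiniFactor U K Y) : IsUFrattiniFactor U X ((X : LieSubalgebra F L) ⊔ Y) :=
    sup_comm (X : LieSubalgebra F L) Y ▸ h.sup_right (LieIdeal.coe_le_coe.2 hX.le)
  have sX := diamond_straight_of_not_isUFrattiniFactor (U := U) hX hY
  have sY := diamond_straight_of_not_isUFrattiniFactor (U := U) hY hX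
  rw [sup_comm (Y : LieSubalgebra F L)] at sY
  simp only [chiefFactorData, LieIdeal.coe_sup, Prod.mk.injEq, eq_iff_iff] at hdX hdY ⊢
  by_cases h1 : ¬ IsUFrattiniFactor U K X ∧ IsUFrattiniFactor U Y ((X : LieSubalgebra F L) ⊔ Y)
  · obtain ⟨hd, h2, h3⟩ := sX h1.1 h1.2
    exact Or.inr ⟨⟨hd, iff_of_false h1.1 h2⟩, ⟨by omega, iff_of_true h3 h1.2⟩⟩
  by_cases h2 : ¬ IsUFrattiniFactor U K Y ∧ IsUFrattiniFactor U X ((X : LieSubalgebra F L) ⊔ Y)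
  · obtain ⟨hd, h3, h4⟩ := sY h2.1 h2.2
    exact Or.inr ⟨⟨hd.symm, iff_of_false h3 h2.1⟩, ⟨by omega, iff_of_true h2.2 h4⟩⟩
  exact Or.inl ⟨⟨hdX, upX, fun h => not_not.1 fun h' => h1 ⟨h', h⟩⟩,
    ⟨hdY.symm, fun h => not_not.1 fun h' => h2 ⟨h', h⟩, upY⟩⟩

end Paper

theorem stmt9 {F : Type*} [Field F] {L : Type*} [LieRing L] [LieAlgebra F L]
    [LieAlgebra.IsSolvable L] [FiniteDimensional F L]
    (U : LieSubalgebra F L) (n : ℕ) (A B : ℕ → LieSubalgebra F L)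
    (hA : Paper.IsChiefSeries A n) (hB : Paper.IsChiefSeries B n) :
    ∃ θ : Equiv.Perm (Fin n), ∀ i : Fin n,
      Paper.factorDim F (A i) (A (i + 1))
        = Paper.factorDim F (B (θ i)) (B ((θ i : ℕ) + 1)) ∧
      (Paper.IsUFrattiniFactor U (A i) (A (i + 1)) ↔
        Paper.IsUFrattiniFactor U (B (θ i)) (B ((θ i : ℕ) + 1))) := by
  obtain ⟨I, hIA, hI0, hI⟩ := hA.exists_lieIdeal
  obtain ⟨J, hJB, hJ0, hJ⟩ := hB.exists_lieIdeal
  have := LieSubmodule.wellFoundedLT_of_isArtinian F L L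
  have h := chainFactors_eq (Paper.chiefFactorData U)
    (fun _ _ _ => Paper.chiefFactorData_diamond U) (hI0.trans hJ0.symm) hI hJ
  rw [chainFactors_eq_map_univ, chainFactors_eq_map_univ] at h
  obtain ⟨θ, hθ⟩ := Fintype.exists_perm_of_map_univ_eq h
  refine ⟨θ, fun i => ?_⟩
  simpa [Paper.chiefFactorData, hIA, hJB] using hθ i
end
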